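/- Let τ ∈ (0,1] and let N ≥ 2 be an integer. Then for all real x, R_N^1(x) = R_N^1(0) - √(2/π) · ((τ/2)^{N-3/2}/(1+τ)) · (N/(N-2)!) · ∫₀ˣ e^{-N u²/(1+τ)} H_{N-2}(√(N/(2τ)) u) H_{N-1}(√(N/(2τ)) u) du, where R_N^1(x) := √(N/(2π)) e^{-N x²/(1+τ)} Σ_{k=0}^{N-2} ((τ/2)^k/k!) H_k(√(N/(2τ)) x)². -/

import Mathlib

open Real MeasureTheory

/-- Physicists' Hermite polynomials: H₀ = 1, H₁ = 2x, H_{n+2} = 2x H_{n+1} - 2(n+1) H_n. -/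
noncomputable def Hp : ℕ → ℝ → ℝ
  | 0 => fun _ => 1
  | 1 => fun x => 2*x
  | n+2 => fun x => 2*x*Hp (n+1) x - 2*(n+1)*Hp n x

/-- R_N^1, the first part of the (unnormalized) density of real eigenvalues. -/
noncomputable def R1 (N : ℕ) (τ : ℝ) (x : ℝ) : ℝ :=
  Real.sqrt (N/(2*Real.pi)) * Real.exp (-N*x^2/(1+τ)) *
    ∑ k ∈ Finset.range (N-1),
      ((τ/2)^k / (Nat.factorial k : ℝ)) * (Hp k (Real.sqrt (N/(2*τ)) * x))^2

/-! Write `R_N^1(x) = √(N/2π) F(√(N/2τ) x)` with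
`F(y) = e^{-2τy²/(1+τ)} Σ_{k<N-1} (τ/2)^k/k! H_k(y)²`. Since `H_k' = 2k H_{k-1}`, the three-term
recurrence makes `(1+τ) Σ (τ/2)^k/k! 2k H_{k-1} H_k` telescope (a Christoffel–Darboux type
identity), and all terms of `F'` cancel except
`F'(y) = -(2τ/(1+τ)) (τ/2)^{N-2}/(N-2)! e^{-2τy²/(1+τ)} H_{N-2}(y) H_{N-1}(y)`.
The theorem is then the fundamental theorem of calculus. -/

open Finset Nat

theorem Hp_succ (n : ℕ) (x : ℝ) : Hp (n + 1) x = 2 * x * Hp n x - 2 * n * Hp (n - 1) x := by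
  cases n with
  | zero => simp [Hp]
  | succ n => simp only [Hp]; push_cast; ring

theorem hasDerivAt_Hp (n : ℕ) (x : ℝ) : HasDerivAt (Hp n) (2 * n * Hp (n - 1) x) x := by
  induction n using Hp.induct generalizing x with
  | case1 => simpa [Hp] using hasDerivAt_const x (1 : ℝ)
  | case2 => simpa [Hp] using (hasDerivAt_id x).const_mul (2 : ℝ)
  | case3 n ih₁ ih₀ =>
    have h : HasDerivAt (fun y => 2 * y * Hp (n + 1) y - 2 * (n + 1) * Hp n y)
        (2 * 1 * Hp (n + 1) x + 2 * x * (2 * (n + 1 : ℕ) * Hp n x)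
          - 2 * (n + 1) * (2 * n * Hp (n - 1) x)) x :=
      (((hasDerivAt_id' x).const_mul 2).mul (ih₁ x)).sub ((ih₀ x).const_mul _)
    refine h.congr_deriv ?_
    push_cast
    linear_combination (-2 * (n + 1) : ℝ) * Hp_succ n x

@[fun_prop]
theorem continuous_Hp (n : ℕ) : Continuous (Hp n) :=
  continuous_iff_continuousAt.2 fun x => (hasDerivAt_Hp n x).continuousAt

noncomputable def hermiteSqSum (τ : ℝ) (n : ℕ) (y : ℝ) : ℝ :=
  ∑ k ∈ range n, (τ / 2) ^ k / k ! * Hp k y ^ 2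

theorem hermiteSqSum_succ (τ : ℝ) (n : ℕ) (y : ℝ) :
    hermiteSqSum τ (n + 1) y = hermiteSqSum τ n y + (τ / 2) ^ n / n ! * Hp n y ^ 2 :=
  sum_range_succ _ _

theorem one_add_mul_sum_Hp_pred_mul_Hp (τ : ℝ) (m : ℕ) (y : ℝ) :
    (1 + τ) * ∑ k ∈ range (m + 1), (τ / 2) ^ k / k ! * (2 * k * Hp (k - 1) y * Hp k y)
      = 2 * τ * y * hermiteSqSum τ (m + 1) y
        - τ * ((τ / 2) ^ m / m !) * (Hp m y * Hp (m + 1) y) := by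
  induction m with
  | zero => simp [hermiteSqSum, Hp]; ring
  | succ m ih =>
    rw [sum_range_succ, mul_add, ih, hermiteSqSum_succ τ (m + 1), Hp_succ (m + 1),
      factorial_succ, Nat.add_sub_cancel]
    have : (m ! : ℝ) ≠ 0 := by positivity
    field_simp
    push_cast
    ring

theorem hasDerivAt_hermiteSqSum (τ : ℝ) (n : ℕ) (y : ℝ) :
    HasDerivAt (hermiteSqSum τ n)
      (2 * ∑ k ∈ range n, (τ / 2) ^ k / k ! * (2 * k * Hp (k - 1) y * Hp k y)) y := by
  rw [mul_sum]
  refine HasDerivAt.fun_sum fun k _ => ?_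
  refine (((hasDerivAt_Hp k y).fun_pow 2).const_mul ((τ / 2) ^ k / k !)).congr_deriv ?_
  push_cast
  ring

theorem hasDerivAt_gaussian_mul_hermiteSqSum {τ : ℝ} (hτ : 1 + τ ≠ 0) (m : ℕ) (y : ℝ) :
    HasDerivAt (fun y => exp (-2 * τ * y ^ 2 / (1 + τ)) * hermiteSqSum τ (m + 1) y)
      (-(2 * τ / (1 + τ) * ((τ / 2) ^ m / m !))
        * (exp (-2 * τ * y ^ 2 / (1 + τ)) * Hp m y * Hp (m + 1) y)) y := by
  have hexp : HasDerivAt (fun y => exp (-2 * τ * y ^ 2 / (1 + τ)))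
      (exp (-2 * τ * y ^ 2 / (1 + τ)) * (-2 * τ * (2 * y) / (1 + τ))) y := by
    simpa using (((hasDerivAt_pow 2 y).const_mul (-2 * τ)).div_const (1 + τ)).exp
  refine (hexp.mul (hasDerivAt_hermiteSqSum τ (m + 1) y)).congr_deriv ?_
  rw [eq_div_of_mul_eq hτ ((mul_comm _ _).trans (one_add_mul_sum_Hp_pred_mul_Hp τ m y))]
  field_simp
  ring

theorem R1_deriv_coeff_eq {τ : ℝ} (hτ : 0 < τ) {N : ℕ} (hN : 2 ≤ N) :
    √(N / (2 * π)) * √(N / (2 * τ)) * (2 * τ / (1 + τ) * ((τ / 2) ^ (N - 2) / (N - 2)!))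
      = √(2 / π) * ((τ / 2) ^ ((N : ℝ) - 3 / 2) / (1 + τ)) * (N / (N - 2)!) := by
  have hrpow : (τ / 2) ^ ((N : ℝ) - 3 / 2) = (τ / 2) ^ (N - 2) * √(τ / 2) := by
    rw [show (N : ℝ) - 3 / 2 = ((N - 2 : ℕ) : ℝ) + 1 / 2 by push_cast [hN]; ring,
      rpow_add (by positivity), rpow_natCast, sqrt_eq_rpow]
  have hsqrt : √(N / (2 * π)) * √(N / (2 * τ)) * (2 * τ) = √(2 / π) * √(τ / 2) * N := by
    have := pi_pos
    rw [← sq_eq_sq₀ (by positivity) (by positivity)]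
    simp only [mul_pow, sq_sqrt (by positivity : (0:ℝ) ≤ N / (2 * π)),
      sq_sqrt (by positivity : (0:ℝ) ≤ N / (2 * τ)), sq_sqrt (by positivity : (0:ℝ) ≤ 2 / π),
      sq_sqrt (by positivity : (0:ℝ) ≤ τ / 2)]
    field_simp
  rw [hrpow]
  linear_combination ((τ / 2) ^ (N - 2) / (N - 2)! / (1 + τ)) * hsqrt

theorem neg_two_mul_mul_sq_sqrt_div {τ : ℝ} (hτ : 0 < τ) {a : ℝ} (ha : 0 ≤ a) (x : ℝ) :
    -2 * τ * (√(a / (2 * τ)) * x) ^ 2 = -a * x ^ 2 := by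
  rw [mul_pow, sq_sqrt (by positivity)]
  field_simp

theorem R1_eq_sqrt_mul_gaussian_mul_hermiteSqSum {τ : ℝ} (hτ : 0 < τ) (N : ℕ) (x : ℝ) :
    R1 N τ x = √(N / (2 * π)) * (exp (-2 * τ * (√(N / (2 * τ)) * x) ^ 2 / (1 + τ))
      * hermiteSqSum τ (N - 1) (√(N / (2 * τ)) * x)) := by
  rw [R1, mul_assoc, neg_two_mul_mul_sq_sqrt_div hτ N.cast_nonneg, hermiteSqSum]

theorem hasDerivAt_R1 {τ : ℝ} (hτ : 0 < τ) {N : ℕ} (hN : 2 ≤ N) (x : ℝ) :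
    HasDerivAt (R1 N τ)
      (-(√(2 / π) * ((τ / 2) ^ ((N : ℝ) - 3 / 2) / (1 + τ)) * (N / (N - 2)!))
        * (exp (-N * x ^ 2 / (1 + τ))
          * Hp (N - 2) (√(N / (2 * τ)) * x) * Hp (N - 1) (√(N / (2 * τ)) * x))) x := by
  obtain ⟨m, rfl⟩ : ∃ m, N = m + 2 := ⟨N - 2, by omega⟩
  have hG := ((hasDerivAt_gaussian_mul_hermiteSqSum (by linarith) m
    (√((m + 2 : ℕ) / (2 * τ)) * x)).comp x ((hasDerivAt_id x).const_mul _)).const_mul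
      √((m + 2 : ℕ) / (2 * π))
  rw [show R1 (m + 2) τ = _ from funext (R1_eq_sqrt_mul_gaussian_mul_hermiteSqSum hτ (m + 2))]
  refine hG.congr_deriv ?_
  rw [← R1_deriv_coeff_eq hτ hN, neg_two_mul_mul_sq_sqrt_div hτ (m + 2 : ℕ).cast_nonneg,
    show m + 2 - 2 = m from rfl, show m + 2 - 1 = m + 1 from rfl]
  ring

/-- Lemma (integral representation of R_N^1): for τ ∈ (0,1] and N ≥ 2,
R_N^1(x) = R_N^1(0) - √(2/π)((τ/2)^{N-3/2}/(1+τ))(N/(N-2)!)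
  ∫₀ˣ e^{-Nu²/(1+τ)} H_{N-2}(√(N/2τ)u) H_{N-1}(√(N/2τ)u) du. -/
theorem R1_integral_representation (τ : ℝ) (hτ : τ ∈ Set.Ioc (0:ℝ) 1)
    (N : ℕ) (hN : 2 ≤ N) (x : ℝ) :
    R1 N τ x = R1 N τ 0
      - Real.sqrt (2/Real.pi) * ((τ/2)^((N:ℝ)-3/2)/(1+τ)) * (N/(Nat.factorial (N-2) : ℝ)) *
        ∫ u in (0:ℝ)..x, Real.exp (-N*u^2/(1+τ))
          * Hp (N-2) (Real.sqrt (N/(2*τ)) * u) * Hp (N-1) (Real.sqrt (N/(2*τ)) * u) := by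
  have hcont : Continuous fun u => exp (-N * u ^ 2 / (1 + τ))
      * Hp (N - 2) (√(N / (2 * τ)) * u) * Hp (N - 1) (√(N / (2 * τ)) * u) := by
    fun_prop
  have hFTC := intervalIntegral.integral_eq_sub_of_hasDerivAt
    (fun t _ => hasDerivAt_R1 hτ.1 hN t) ((continuous_const.mul hcont).intervalIntegrable 0 x)
  rw [intervalIntegral.integral_const_mul] at hFTC
  linarith
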